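/- arXiv:1206.6748 — 3 statements merged into one kernel-verified Lean document; each statement's English description precedes it below -/
import Mathlib

section
/- Let b < 0, let h : [0,∞) → ℝ be continuous with h(r) ≤ (1/2)(√(-b)·coth(√(-b)·r) − √(-b)) for all r > 0, and define W(t) = sinh(√(-b)t)/(√(-b)·e^{2∫₀ᵗ h(s)ds}). Then the isoperimetric quotient q_W(t) = (∫₀ᵗ W(s)ds)/W(t) satisfies q_W(t) ≤ 1/√(-b) for all t > 0. -/
/-!
Writing `a = √(-b)` and `H(t) = ∫₀ᵗ h`, the logarithmic derivative of
`W(t) = sinh(a t) / (a e^{2H(t)})` is `a coth(a t) - 2h(t)`, which the hypothesis on `h` bounds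
below by `a`. Hence `a W ≤ W'` on `(0, t)`, and since `W(0) = 0`, integrating gives
`a ∫₀ᵗ W ≤ W(t)`.
-/

open Real Set

theorem intervalIntegral.integral_le_sub_div_of_mul_le_deriv {f f' : ℝ → ℝ} {a s t : ℝ}
    (ha : 0 < a) (hst : s ≤ t) (hf : ContinuousOn f (Icc s t))
    (hderiv : ∀ x ∈ Ioo s t, HasDerivAt f (f' x) x) (hle : ∀ x ∈ Ioo s t, a * f x ≤ f' x) :
    ∫ x in s..t, f x ≤ (f t - f s) / a := by
  rw [sub_div]
  refine integral_le_sub_of_hasDeriv_right_of_le hst (hf.div_const a)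
    (fun x hx => ((hderiv x hx).div_const a).hasDerivWithinAt) (hf.integrableOn_Icc)
    fun x hx => ?_
  rw [le_div_iff₀ ha, mul_comm]
  exact hle x hx

theorem hasDerivAt_integral_of_continuousOn_Ici {h : ℝ → ℝ} (hcont : ContinuousOn h (Ici 0))
    {u : ℝ} (hu : 0 < u) : HasDerivAt (fun t => ∫ s in (0 : ℝ)..t, h s) (h u) u :=
  intervalIntegral.integral_hasDerivAt_right
    ((hcont.mono Icc_subset_Ici_self).intervalIntegrable_of_Icc hu.le)
    (hcont.mono Ioi_subset_Ici_self |>.stronglyMeasurableAtFilter isOpen_Ioi u hu)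
    (hcont.continuousAt (Ici_mem_nhds hu))

theorem continuousOn_integral_of_continuousOn_Ici {h : ℝ → ℝ} (hcont : ContinuousOn h (Ici 0))
    {t : ℝ} (ht : 0 ≤ t) : ContinuousOn (fun u => ∫ s in (0 : ℝ)..u, h s) (Icc 0 t) := by
  simpa [uIcc_of_le ht] using intervalIntegral.continuousOn_primitive_interval
    ((hcont.mono Icc_subset_Ici_self).integrableOn_Icc.mono_set (uIcc_of_le ht).subset)

theorem hasDerivAt_sinh_div_exp {H : ℝ → ℝ} {a c u : ℝ} (ha : a ≠ 0) (hsinh : sinh (a * u) ≠ 0)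
    (hH : HasDerivAt H c u) :
    HasDerivAt (fun t => sinh (a * t) / (a * exp (2 * H t)))
      (sinh (a * u) / (a * exp (2 * H u)) * (a * (cosh (a * u) / sinh (a * u)) - 2 * c)) u := by
  have hsinh' : HasDerivAt (fun t => sinh (a * t)) (cosh (a * u) * a) u := by
    simpa using ((hasDerivAt_id u).const_mul a).sinh
  have hexp : HasDerivAt (fun t => a * exp (2 * H t)) (a * (exp (2 * H u) * (2 * c))) u :=
    ((hH.const_mul 2).exp).const_mul a
  refine (hsinh'.div hexp (by positivity)).congr_deriv ?_
  field_simp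

theorem stmt_3 (b : ℝ) (hb : b < 0) (h : ℝ → ℝ)
    (hcont : ContinuousOn h (Set.Ici 0))
    (hbal : ∀ r > 0, h r ≤ (1 / 2) *
      (Real.sqrt (-b) * (Real.cosh (Real.sqrt (-b) * r) / Real.sinh (Real.sqrt (-b) * r))
        - Real.sqrt (-b)))
    (W : ℝ → ℝ)
    (hW : ∀ t, W t = Real.sinh (Real.sqrt (-b) * t) /
      (Real.sqrt (-b) * Real.exp (2 * ∫ s in (0:ℝ)..t, h s))) :
    ∀ t > 0, (∫ s in (0:ℝ)..t, W s) / W t ≤ 1 / Real.sqrt (-b) := by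
  intro t ht
  set a := √(-b)
  have ha : 0 < a := sqrt_pos.2 (neg_pos.2 hb)
  have hsinh : ∀ u > 0, 0 < sinh (a * u) := fun u hu => sinh_pos_iff.2 (mul_pos ha hu)
  have hWeq : W = fun u => sinh (a * u) / (a * exp (2 * ∫ s in (0 : ℝ)..u, h s)) := funext hW
  have hWpos : ∀ u > 0, 0 < W u := fun u hu => by rw [hW]; have := hsinh u hu; positivity
  have hcontW : ContinuousOn W (Icc 0 t) := by
    rw [hWeq]
    exact (continuous_sinh.comp (continuous_const_mul a)).continuousOn.div
      (continuousOn_const.mul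
        (continuousOn_const.mul (continuousOn_integral_of_continuousOn_Ici hcont ht.le)).rexp)
      fun u _ => by positivity
  have hderiv : ∀ u ∈ Ioo 0 t,
      HasDerivAt W (W u * (a * (cosh (a * u) / sinh (a * u)) - 2 * h u)) u := by
    intro u hu
    rw [hWeq]
    exact hasDerivAt_sinh_div_exp ha.ne' (hsinh u hu.1).ne'
      (hasDerivAt_integral_of_continuousOn_Ici hcont hu.1)
  have hgrowth : ∀ u ∈ Ioo 0 t, a * W u ≤ W u * (a * (cosh (a * u) / sinh (a * u)) - 2 * h u) := by
    intro u hu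
    rw [mul_comm]
    exact mul_le_mul_of_nonneg_left (by linarith [hbal u hu.1]) (hWpos u hu.1).le
  have key := intervalIntegral.integral_le_sub_div_of_mul_le_deriv ha ht.le hcontW hderiv hgrowth
  rw [hW 0, mul_zero, sinh_zero, zero_div, sub_zero] at key
  rw [div_le_div_iff₀ (hWpos t ht) ha, one_mul, ← le_div_iff₀ ha]
  exact key
end

section
/- Let b < 0 and h : [0,∞) → ℝ continuous with |h(r)| ≤ (1/2)(√(-b)·coth(√(-b)·r) − √(-b)) for all r > 0, and let q_W be the isoperimetric quotient of the associated warping function W. Then there exists t₀ ≥ 0 such that for all r ≥ t₀, q_W(r)·(√(-b)·coth(√(-b)·r) − h(r)) ≥ 1/2. -/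
/-!
With `a = √(-b)` and `H = ∫₀ᵗ h`, the warping function is `W = sinh (a t) / (a e^{2H})`.
The balance condition `2|h| ≤ a coth (a t) - a` makes `2H + log sinh (a t) - a t`
nondecreasing, i.e. `W(t) e^{at} / sinh² (at)` nonincreasing. Hence for `0 ≤ s ≤ r`,
`W(s) ≥ W(r) e^{ar} sinh² (as) e^{-as} / sinh² (ar)`, and `sinh² x e^{-x} ≥ (e^x - 2) / 4`;
integrating over `[0, r]` gives `q_W(r) ≥ (1 - (1 + 2ar) e^{-ar}) / a ≥ 1 / (2a)` once
`ar ≥ 7`. The other half of the balance condition gives `a coth (ar) - h(r) ≥ a`.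
-/

open Real Set intervalIntegral MeasureTheory

noncomputable def warping (a : ℝ) (h : ℝ → ℝ) (t : ℝ) : ℝ :=
  sinh (a * t) / (a * exp (2 * ∫ s in (0:ℝ)..t, h s))

lemma hasDerivAt_log_sinh_mul {a u : ℝ} (hu : sinh (a * u) ≠ 0) :
    HasDerivAt (fun u => log (sinh (a * u))) (a * (cosh (a * u) / sinh (a * u))) u := by
  convert ((hasDerivAt_id' u).const_mul a).sinh.log hu using 1
  ring

lemma exp_sub_two_div_four_le_sinh_sq_div_exp (x : ℝ) :
    (exp x - 2) / 4 ≤ sinh x ^ 2 / exp x := by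
  have he := exp_pos x
  have hinv : exp (-x) * exp x = 1 := by rw [← exp_add, neg_add_cancel, exp_zero]
  rw [le_div_iff₀ he, sinh_eq]
  nlinarith [exp_pos (-x), sq_nonneg (exp (-x) - 1)]

lemma two_add_four_mul_le_exp {x : ℝ} (hx : 7 ≤ x) : 2 + 4 * x ≤ exp x := by
  nlinarith [quadratic_le_exp_of_nonneg (by linarith : 0 ≤ x)]

lemma integral_exp_mul_sub_two {a : ℝ} (ha : a ≠ 0) (r : ℝ) :
    ∫ s in (0:ℝ)..r, (exp (a * s) - 2) = (exp (a * r) - 1) / a - 2 * r := by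
  rw [integral_sub (Continuous.intervalIntegrable (by fun_prop) _ _) intervalIntegrable_const,
    integral_comp_mul_left exp ha, integral_exp, intervalIntegral.integral_const]
  simp only [mul_zero, exp_zero, smul_eq_mul, sub_zero]
  field_simp

def IsBalanced (a : ℝ) (h : ℝ → ℝ) : Prop :=
  ∀ u > 0, |h u| ≤ (1 / 2) * (a * (cosh (a * u) / sinh (a * u)) - a)

section Balanced

variable {a : ℝ} {h : ℝ → ℝ}

lemma hasDerivAt_primitive_of_continuousOn_Ici (hcont : ContinuousOn h (Ici 0)) {u : ℝ}
    (hu : 0 < u) : HasDerivAt (fun t => ∫ s in (0:ℝ)..t, h s) (h u) u :=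
  integral_hasDerivAt_right ((hcont.mono Icc_subset_Ici_self).intervalIntegrable_of_Icc hu.le)
    (hcont.mono Ioi_subset_Ici_self |>.stronglyMeasurableAtFilter isOpen_Ioi u hu)
    (hcont.continuousAt (Ici_mem_nhds hu))

lemma continuousOn_warping (ha : a ≠ 0) (hcont : ContinuousOn h (Ici 0)) {r : ℝ}
    (hr : 0 ≤ r) :
    ContinuousOn (warping a h) (uIcc 0 r) := by
  have hH : ContinuousOn (fun t => ∫ s in (0:ℝ)..t, h s) (uIcc 0 r) :=
    continuousOn_primitive_interval'
      ((hcont.mono Icc_subset_Ici_self).intervalIntegrable_of_Icc hr) left_mem_uIcc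
  exact ContinuousOn.div (by fun_prop) (by fun_prop) fun t _ => by positivity

lemma warping_pos (ha : 0 < a) {r : ℝ} (hr : 0 < r) : 0 < warping a h r :=
  div_pos (sinh_pos_iff.mpr (mul_pos ha hr)) (by positivity)

lemma warping_mul_exp_div_sinh_sq (ha : 0 < a) {u : ℝ} (hu : 0 < u) :
    warping a h u * exp (a * u) / sinh (a * u) ^ 2 =
      exp (-(2 * (∫ s in (0:ℝ)..u, h s) + log (sinh (a * u)) - a * u)) / a := by
  have hs : 0 < sinh (a * u) := sinh_pos_iff.mpr (mul_pos ha hu)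
  rw [neg_sub, exp_sub, exp_add, exp_log hs, warping]
  field_simp

lemma le_mul_coth_sub (ha : 0 < a) (hbal : IsBalanced a h) {r : ℝ} (hr : 0 < r) :
    a ≤ a * (cosh (a * r) / sinh (a * r)) - h r := by
  have hcoth : a ≤ a * (cosh (a * r) / sinh (a * r)) :=
    le_mul_of_one_le_right ha.le
      ((one_le_div (sinh_pos_iff.mpr (mul_pos ha hr))).mpr (sinh_lt_cosh _).le)
  linarith [(abs_le.mp (hbal r hr)).2]

lemma monotoneOn_two_primitive_add_log_sinh_sub (ha : 0 < a) (hcont : ContinuousOn h (Ici 0))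
    (hbal : IsBalanced a h) :
    MonotoneOn (fun u => 2 * (∫ s in (0:ℝ)..u, h s) + log (sinh (a * u)) - a * u) (Ioi 0) := by
  have hderiv : ∀ u ∈ Ioi (0:ℝ),
      HasDerivAt (fun u => 2 * (∫ s in (0:ℝ)..u, h s) + log (sinh (a * u)) - a * u)
        (2 * h u + a * (cosh (a * u) / sinh (a * u)) - a) u := fun u hu =>
    ((((hasDerivAt_primitive_of_continuousOn_Ici hcont hu).const_mul 2).add
      (hasDerivAt_log_sinh_mul (sinh_pos_iff.mpr (mul_pos ha hu)).ne')).sub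
      ((hasDerivAt_id' u).const_mul a)).congr_deriv (by ring)
  refine monotoneOn_of_deriv_nonneg (convex_Ioi 0)
    (fun u hu => (hderiv u hu).continuousAt.continuousWithinAt) ?_ ?_ <;> rw [interior_Ioi]
  · exact fun u hu => (hderiv u hu).differentiableAt.differentiableWithinAt
  · intro u hu
    rw [(hderiv u hu).deriv]
    linarith [(abs_le.mp (hbal u hu)).1]

lemma antitoneOn_warping_mul_exp_div_sinh_sq (ha : 0 < a) (hcont : ContinuousOn h (Ici 0))
    (hbal : IsBalanced a h) :
    AntitoneOn (fun u => warping a h u * exp (a * u) / sinh (a * u) ^ 2) (Ioi 0) := by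
  intro s hs r hr hsr
  simp only [warping_mul_exp_div_sinh_sq ha hs, warping_mul_exp_div_sinh_sq ha hr]
  have hmono := monotoneOn_two_primitive_add_log_sinh_sub ha hcont hbal hs hr hsr
  exact div_le_div_of_nonneg_right (exp_le_exp.mpr (neg_le_neg hmono)) ha.le

lemma mul_exp_sub_two_div_four_le_warping (ha : 0 < a) (hcont : ContinuousOn h (Ici 0))
    (hbal : IsBalanced a h) {r s : ℝ} (hs : 0 ≤ s) (hsr : s ≤ r) :
    warping a h r * exp (a * r) / sinh (a * r) ^ 2 * ((exp (a * s) - 2) / 4) ≤ warping a h s := by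
  have hWr : 0 ≤ warping a h r := div_nonneg (sinh_nonneg_iff.mpr (by nlinarith)) (by positivity)
  have hC : 0 ≤ warping a h r * exp (a * r) / sinh (a * r) ^ 2 :=
    div_nonneg (mul_nonneg hWr (exp_pos _).le) (sq_nonneg _)
  rcases hs.eq_or_lt with rfl | hs
  · rw [show warping a h 0 = 0 by simp [warping], mul_zero, exp_zero]
    exact mul_nonpos_of_nonneg_of_nonpos hC (by norm_num)
  have hsinh : 0 < sinh (a * s) := sinh_pos_iff.mpr (mul_pos ha hs)
  calc warping a h r * exp (a * r) / sinh (a * r) ^ 2 * ((exp (a * s) - 2) / 4)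
      ≤ warping a h r * exp (a * r) / sinh (a * r) ^ 2 * (sinh (a * s) ^ 2 / exp (a * s)) :=
        mul_le_mul_of_nonneg_left (exp_sub_two_div_four_le_sinh_sq_div_exp _) hC
    _ ≤ warping a h s * exp (a * s) / sinh (a * s) ^ 2 * (sinh (a * s) ^ 2 / exp (a * s)) :=
        mul_le_mul_of_nonneg_right
          (antitoneOn_warping_mul_exp_div_sinh_sq ha hcont hbal hs (hs.trans_le hsr) hsr)
          (by positivity)
    _ = warping a h s := by field_simp

lemma mul_integral_exp_sub_two_le_integral_warping (ha : 0 < a) (hcont : ContinuousOn h (Ici 0))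
    (hbal : IsBalanced a h) {r : ℝ} (hr : 0 ≤ r) :
    warping a h r * exp (a * r) / sinh (a * r) ^ 2 * (((exp (a * r) - 1) / a - 2 * r) / 4) ≤
      ∫ s in (0:ℝ)..r, warping a h s := by
  rw [← integral_exp_mul_sub_two ha.ne', ← intervalIntegral.integral_div,
    ← intervalIntegral.integral_const_mul]
  refine integral_mono_on hr (Continuous.intervalIntegrable (by fun_prop) _ _)
    ((continuousOn_warping ha.ne' hcont hr).intervalIntegrable) fun s hs => ?_
  exact mul_exp_sub_two_div_four_le_warping ha hcont hbal hs.1 hs.2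

lemma inv_two_mul_le_integral_warping_div (ha : 0 < a) (hcont : ContinuousOn h (Ici 0))
    (hbal : IsBalanced a h) {r : ℝ} (hr : 7 ≤ a * r) :
    1 / (2 * a) ≤ (∫ s in (0:ℝ)..r, warping a h s) / warping a h r := by
  have hr0 : 0 < r := pos_of_mul_pos_right (by linarith) ha.le
  have hW := warping_pos (h := h) ha hr0
  have hsinh : 0 < sinh (a * r) := sinh_pos_iff.mpr (mul_pos ha hr0)
  have hsinh_le : 2 * sinh (a * r) ≤ exp (a * r) := by
    linarith [sinh_add_cosh (a * r), sinh_lt_cosh (a * r)]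
  have hexp := two_add_four_mul_le_exp hr
  rw [le_div_iff₀ hW]
  refine le_trans ?_ (mul_integral_exp_sub_two_le_integral_warping ha hcont hbal hr0.le)
  have hbound :
      1 / 2 ≤ exp (a * r) * (exp (a * r) - 1 - 2 * (a * r)) / (4 * sinh (a * r) ^ 2) := by
    rw [le_div_iff₀ (by positivity)]
    nlinarith
  calc 1 / (2 * a) * warping a h r
      = 1 / 2 * (1 / a) * warping a h r := by ring
    _ ≤ exp (a * r) * (exp (a * r) - 1 - 2 * (a * r)) / (4 * sinh (a * r) ^ 2) * (1 / a)
          * warping a h r := by gcongr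
    _ = _ := by field_simp

end Balanced

theorem stmt_5 (b : ℝ) (hb : b < 0) (h : ℝ → ℝ)
    (hcont : ContinuousOn h (Set.Ici 0))
    (hbal : ∀ r > 0, |h r| ≤ (1 / 2) *
      (Real.sqrt (-b) * (Real.cosh (Real.sqrt (-b) * r) / Real.sinh (Real.sqrt (-b) * r))
        - Real.sqrt (-b)))
    (W : ℝ → ℝ)
    (hW : ∀ t, W t = Real.sinh (Real.sqrt (-b) * t) /
      (Real.sqrt (-b) * Real.exp (2 * ∫ s in (0:ℝ)..t, h s))) :
    ∃ t₀ ≥ (0:ℝ), ∀ r ≥ t₀,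
      ((∫ s in (0:ℝ)..r, W s) / W r) *
        (Real.sqrt (-b) * (Real.cosh (Real.sqrt (-b) * r) / Real.sinh (Real.sqrt (-b) * r))
          - h r) ≥ 1 / 2 := by
  set a := Real.sqrt (-b)
  have ha : 0 < a := sqrt_pos.mpr (neg_pos.mpr hb)
  obtain rfl : W = warping a h := funext hW
  refine ⟨7 / a, by positivity, fun r hr => ?_⟩
  have har : 7 ≤ a * r := by rwa [ge_iff_le, div_le_iff₀' ha] at hr
  have hr0 : 0 < r := pos_of_mul_pos_right (by linarith) ha.le
  have hq := inv_two_mul_le_integral_warping_div ha hcont hbal har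
  calc 1 / 2 = 1 / (2 * a) * a := by field_simp
    _ ≤ _ := mul_le_mul hq (le_mul_coth_sub ha hbal hr0) ha.le (le_trans (by positivity) hq)
end

section
/- Let v : [0,∞) → [0,∞) be continuously differentiable with v(0) = 0, b < 0, t₀ ≥ 0, v₀ = v(t₀), and 0 ≤ C ≤ 1, and suppose (cosh(√(-b)t) − C)·v'(t) ≥ (v(t) − v₀)·√(-b)·sinh(√(-b)t) for all t ≥ 0. Then for all t ≥ 0, ∫₀ᵗ cosh(√(-b)s)·v'(s) ds ≥ ((cosh(√(-b)t) + C)/2)·v(t) − (v₀/2)·(cosh(√(-b)t) − 1). -/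
open Real intervalIntegral

theorem integral_sub_const_mul_deriv {f w : ℝ → ℝ} (hf : Continuous f) (hw : ContDiff ℝ 1 w)
    (c a b : ℝ) :
    ∫ s in a..b, (f s - c * deriv w s) = (∫ s in a..b, f s) - c * (w b - w a) := by
  have hw' : Continuous (deriv w) := hw.continuous_deriv le_rfl
  rw [integral_sub (hf.intervalIntegrable a b) ((hw'.const_mul c).intervalIntegrable a b),
    integral_const_mul, integral_deriv_eq_sub (fun s _ => hw.differentiable one_ne_zero s)
      (hw'.intervalIntegrable a b)]

/- Integrating `(v - c) u' ≤ (u - C) v'` and integrating `∫ u' v` by parts makes `∫ u v'`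
appear on both sides. -/
theorem two_mul_integral_mul_deriv_ge {u v : ℝ → ℝ} (hu : ContDiff ℝ 1 u) (hv : ContDiff ℝ 1 v)
    {a t c C : ℝ} (hat : a ≤ t)
    (h : ∀ s ∈ Set.Icc a t, (v s - c) * deriv u s ≤ (u s - C) * deriv v s) :
    (u t + C) * v t - (u a + C) * v a - c * (u t - u a) ≤ 2 * ∫ s in a..t, u s * deriv v s := by
  have hud : Differentiable ℝ u := hu.differentiable one_ne_zero
  have hvd : Differentiable ℝ v := hv.differentiable one_ne_zero
  have hu' : Continuous (deriv u) := hu.continuous_deriv le_rfl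
  have hv' : Continuous (deriv v) := hv.continuous_deriv le_rfl
  have ibp : ∫ s in a..t, u s * deriv v s = u t * v t - u a * v a - ∫ s in a..t, deriv u s * v s :=
    integral_mul_deriv_eq_deriv_mul (fun s _ => (hud s).hasDerivAt) (fun s _ => (hvd s).hasDerivAt)
      (hu'.intervalIntegrable a t) (hv'.intervalIntegrable a t)
  have mono : ∫ s in a..t, (v s - c) * deriv u s ≤ ∫ s in a..t, (u s - C) * deriv v s :=
    integral_mono_on hat
      ((by fun_prop : Continuous fun s => (v s - c) * deriv u s).intervalIntegrable a t)
      ((by fun_prop : Continuous fun s => (u s - C) * deriv v s).intervalIntegrable a t) h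
  have lhs : ∫ s in a..t, (v s - c) * deriv u s
      = (∫ s in a..t, deriv u s * v s) - c * (u t - u a) := by
    rw [← integral_sub_const_mul_deriv (by fun_prop) hu]
    exact integral_congr fun s _ => by ring
  have rhs : ∫ s in a..t, (u s - C) * deriv v s
      = (∫ s in a..t, u s * deriv v s) - C * (v t - v a) := by
    rw [← integral_sub_const_mul_deriv (by fun_prop) hv]
    exact integral_congr fun s _ => by ring
  rw [lhs, rhs] at mono
  linarith

theorem stmt_12_general (b : ℝ) (v : ℝ → ℝ) (hv : ContDiff ℝ 1 v)
    (hv0 : v 0 = 0)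
    (t₀ : ℝ) (C : ℝ)
    (hineq : ∀ t ≥ (0:ℝ),
      (Real.cosh (Real.sqrt (-b) * t) - C) * deriv v t ≥
        (v t - v t₀) * Real.sqrt (-b) * Real.sinh (Real.sqrt (-b) * t)) :
    ∀ t ≥ (0:ℝ),
      (∫ s in (0:ℝ)..t, Real.cosh (Real.sqrt (-b) * s) * deriv v s) ≥
        ((Real.cosh (Real.sqrt (-b) * t) + C) / 2) * v t -
          (v t₀ / 2) * (Real.cosh (Real.sqrt (-b) * t) - 1) := by
  intro t ht
  set κ := Real.sqrt (-b)
  have hcosh : ContDiff ℝ 1 fun s => cosh (κ * s) := by fun_prop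
  have hderiv (s : ℝ) : deriv (fun s => cosh (κ * s)) s = κ * sinh (κ * s) := by
    have := ((hasDerivAt_id s).const_mul κ).cosh
    simp only [id, mul_one] at this
    rw [this.deriv, mul_comm]
  have key := two_mul_integral_mul_deriv_ge hcosh hv (c := v t₀) (C := C) ht fun s hs => by
    rw [hderiv]
    linarith [hineq s hs.1]
  simp only [mul_zero, cosh_zero, hv0] at key
  linarith

theorem stmt_12 (b : ℝ) (hb : b < 0) (v : ℝ → ℝ) (hv : ContDiff ℝ 1 v)
    (hvnonneg : ∀ t ≥ (0:ℝ), 0 ≤ v t) (hv0 : v 0 = 0)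
    (t₀ : ℝ) (ht₀ : 0 ≤ t₀) (C : ℝ) (hC0 : 0 ≤ C) (hC1 : C ≤ 1)
    (hineq : ∀ t ≥ (0:ℝ),
      (Real.cosh (Real.sqrt (-b) * t) - C) * deriv v t ≥
        (v t - v t₀) * Real.sqrt (-b) * Real.sinh (Real.sqrt (-b) * t)) :
    ∀ t ≥ (0:ℝ),
      (∫ s in (0:ℝ)..t, Real.cosh (Real.sqrt (-b) * s) * deriv v s) ≥
        ((Real.cosh (Real.sqrt (-b) * t) + C) / 2) * v t -
          (v t₀ / 2) * (Real.cosh (Real.sqrt (-b) * t) - 1) :=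
  stmt_12_general b v hv hv0 t₀ C hineq
end
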